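/- Let f : H → G be a homomorphism of Hilbert algebras. For an upset U of X*(H), define g(U) = {F ∈ X*(G) : every J ∈ X*(H) with f⁻¹(F) ⊆ J satisfies J ∈ U}. Then g(U) is an upset of X*(G) for every upset U of X*(H), and for all upsets U, V of X*(H): g(X*(H)) = X*(G), g(U ∩ V) = g(U) ∩ g(V), g(U ∪ V) = g(U) ∪ g(V), and g(U ⇒ V) = g(U) ⇒ g(V). -/

import Mathlib

/-- A Hilbert algebra `(H, →, 1)`. -/
structure HilbertAlgebra (H : Type*) where
  imp : H → H → H
  one : H
  ax1 : ∀ a b : H, imp a (imp b a) = one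
  ax2 : ∀ a b c : H, imp (imp a (imp b c)) (imp (imp a b) (imp a c)) = one
  ax3 : ∀ a b : H, imp a b = one → imp b a = one → a = b

namespace HilbertAlgebra

variable {H : Type*} (hH : HilbertAlgebra H)

/-- The natural order: `a ≤ b` iff `a → b = 1`. -/
def le (a b : H) : Prop := hH.imp a b = hH.one

/-- Implicative filter. -/
def IsImplicativeFilter (F : Set H) : Prop :=
  hH.one ∈ F ∧ ∀ a b : H, a ∈ F → hH.imp a b ∈ F → b ∈ F

/-- Irreducible implicative filter. -/
def IsIrreducible (F : Set H) : Prop :=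
  hH.IsImplicativeFilter F ∧ F ≠ Set.univ ∧
    ∀ F₁ F₂ : Set H, hH.IsImplicativeFilter F₁ → hH.IsImplicativeFilter F₂ →
      F = F₁ ∩ F₂ → (F = F₁ ∨ F = F₂)

/-- Order-ideal: nonempty, downward closed, up-directed (w.r.t. the natural order). -/
def IsOrderIdeal (I : Set H) : Prop :=
  I.Nonempty ∧ (∀ a b : H, b ∈ I → hH.le a b → a ∈ I) ∧
    ∀ a b : H, a ∈ I → b ∈ I → ∃ c ∈ I, hH.le a c ∧ hH.le b c

/-- `φ(a) = {P ∈ X(H) : a ∈ P}`. -/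
def phi (a : H) : Set (Set H) := {P | hH.IsIrreducible P ∧ a ∈ P}

/-- An upset of `X(H)` (the poset of irreducible implicative filters, ordered by `⊆`). -/
def IsUpsetX (U : Set (Set H)) : Prop :=
  (∀ P ∈ U, hH.IsIrreducible P) ∧
    ∀ P Q : Set H, P ∈ U → hH.IsIrreducible Q → P ⊆ Q → Q ∈ U

/-- The Heyting implication `U ⇒ V` on upsets of `X(H)`. -/
def impUps (U V : Set (Set H)) : Set (Set H) :=
  {P | hH.IsIrreducible P ∧ ∀ Q : Set H, hH.IsIrreducible Q → P ⊆ Q → Q ∈ U → Q ∈ V}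

/-- `FC(H)`: finite nonempty intersections of sets of the form `φ(a)`. -/
def FC : Set (Set (Set H)) :=
  {U | ∃ l : List H, l ≠ [] ∧ U = ⋂ a ∈ l, hH.phi a}

/-- `X*(H)`: implicative filters that are intersections of finitely many (at least one)
irreducible implicative filters. -/
def XStar : Set (Set H) :=
  {F | ∃ S : Set (Set H), S.Finite ∧ S.Nonempty ∧ (∀ P ∈ S, hH.IsIrreducible P) ∧ F = ⋂₀ S}

/-- `Φ(a) = {F ∈ X*(H) : a ∈ F}`. -/
def Phi (a : H) : Set (Set H) := {F | F ∈ hH.XStar ∧ a ∈ F}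

/-- An upset of `X*(H)` (ordered by `⊆`). -/
def IsUpsetXStar (U : Set (Set H)) : Prop :=
  (∀ F ∈ U, F ∈ hH.XStar) ∧
    ∀ F K : Set H, F ∈ U → K ∈ hH.XStar → F ⊆ K → K ∈ U

/-- The implication `U ⇒ V` on upsets of `X*(H)`. -/
def impUpsStar (U V : Set (Set H)) : Set (Set H) :=
  {F | F ∈ hH.XStar ∧ ∀ K : Set H, K ∈ hH.XStar → F ⊆ K → K ∈ U → K ∈ V}

/-- Homomorphism of Hilbert algebras. -/
def IsHom {G : Type*} (hG : HilbertAlgebra G) (f : H → G) : Prop :=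
  f hH.one = hG.one ∧ ∀ a b : H, f (hH.imp a b) = hG.imp (f a) (f b)

end HilbertAlgebra

/-- A Hilbert algebra with supremum: `(H, ∨)` is a join-semilattice whose induced
order has greatest element `1`, and `a → b = 1` iff `a ∨ b = b`. -/
structure HilbertSup (H : Type*) extends HilbertAlgebra H where
  sup : H → H → H
  sup_comm : ∀ a b : H, sup a b = sup b a
  sup_assoc : ∀ a b c : H, sup (sup a b) c = sup a (sup b c)
  sup_idem : ∀ a : H, sup a a = a
  sup_one : ∀ a : H, sup a one = one
  imp_eq_one_iff : ∀ a b : H, imp a b = one ↔ sup a b = b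

/-- Morphism of Hilbert algebras with supremum. -/
def HilbertSup.IsHomSup {H G : Type*} (hH : HilbertSup H) (hG : HilbertSup G)
    (f : H → G) : Prop :=
  hH.toHilbertAlgebra.IsHom hG.toHilbertAlgebra f ∧
    ∀ a b : H, f (hH.sup a b) = hG.sup (f a) (f b)

/-- An implicative semilattice: a meet-semilattice with greatest element and a binary
operation `him` such that `a ⊓ b ≤ c ↔ a ≤ him b c`. -/
class ImplicativeSemilattice (G : Type*) extends SemilatticeInf G, OrderTop G where
  him : G → G → G
  inf_le_iff_le_him : ∀ a b c : G, a ⊓ b ≤ c ↔ a ≤ him b c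

/-- `g(U) = {F ∈ X*(G) : every J ∈ X*(H) with f⁻¹(F) ⊆ J satisfies J ∈ U}`. -/
def gstar {H G : Type*} (hH : HilbertAlgebra H) (hG : HilbertAlgebra G) (f : H → G)
    (U : Set (Set H)) : Set (Set G) :=
  {F | F ∈ hG.XStar ∧ ∀ J : Set H, J ∈ hH.XStar → f ⁻¹' F ⊆ J → J ∈ U}

/-!
All five identities are formal consequences of the definition of `g` except the inclusion
`g(U) ⇒ g(V) ⊆ g(U ⇒ V)`, which needs a lifting property of `f`: whenever `F ∈ X*(G)` and
`K ∈ X*(H)` satisfy `f⁻¹(F) ⊆ K`, some `F' ⊇ F` in `X*(G)` has `f⁻¹(F') = K`. It suffices to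
lift each irreducible component `Q` of `K`, and a lift of `Q` is a filter `P ⊇ F` maximal
(by Zorn) subject to `f⁻¹(P) ⊆ Q`: maximality forces `f⁻¹(P) = Q`, and irreducibility of `Q`
pulls back to irreducibility of `P`.
-/

namespace HilbertAlgebra

variable {H G : Type*} (hH : HilbertAlgebra H) (hG : HilbertAlgebra G)

theorem eq_one_of_one_imp_eq_one {x : H} (hx : hH.imp hH.one x = hH.one) : x = hH.one :=
  hH.ax3 x hH.one (by simpa only [hx] using hH.ax1 x hH.one) hx

theorem imp_one (a : H) : hH.imp a hH.one = hH.one :=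
  hH.eq_one_of_one_imp_eq_one (hH.ax1 hH.one a)

theorem imp_self (a : H) : hH.imp a a = hH.one := by
  have h := hH.ax2 a (hH.imp a a) a
  rw [hH.ax1 a (hH.imp a a)] at h
  have h' := hH.eq_one_of_one_imp_eq_one h
  rw [hH.ax1 a a] at h'
  exact hH.eq_one_of_one_imp_eq_one h'

/-- The implicative filter generated by `F ∪ {a}` when `F` is an implicative filter. -/
def adjoin (F : Set H) (a : H) : Set H := {x | hH.imp a x ∈ F}

variable {hH hG}

theorem IsImplicativeFilter.mem_of_imp_eq_one {F : Set H} (hF : hH.IsImplicativeFilter F)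
    {a b : H} (ha : a ∈ F) (hab : hH.imp a b = hH.one) : b ∈ F :=
  hF.2 a b ha (hab ▸ hF.1)

theorem IsImplicativeFilter.adjoin {F : Set H} (hF : hH.IsImplicativeFilter F) (a : H) :
    hH.IsImplicativeFilter (hH.adjoin F a) := by
  refine ⟨by simpa only [HilbertAlgebra.adjoin, Set.mem_ofPred_eq, imp_one] using hF.1, ?_⟩
  intro x y hx hxy
  exact hF.2 _ _ hx (hF.mem_of_imp_eq_one hxy (hH.ax2 a x y))

theorem IsImplicativeFilter.subset_adjoin {F : Set H} (hF : hH.IsImplicativeFilter F) (a : H) :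
    F ⊆ hH.adjoin F a :=
  fun x hx => hF.mem_of_imp_eq_one hx (hH.ax1 x a)

theorem IsImplicativeFilter.mem_adjoin_self {F : Set H} (hF : hH.IsImplicativeFilter F)
    (a : H) : a ∈ hH.adjoin F a := by
  simpa only [HilbertAlgebra.adjoin, Set.mem_ofPred_eq, imp_self] using hF.1

theorem IsImplicativeFilter.preimage {f : H → G} (hf : hH.IsHom hG f) {F : Set G}
    (hF : hG.IsImplicativeFilter F) : hH.IsImplicativeFilter (f ⁻¹' F) := by
  refine ⟨by simpa only [Set.mem_preimage, hf.1] using hF.1, fun a b ha hab => ?_⟩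
  rw [Set.mem_preimage, hf.2] at hab
  exact hF.2 _ _ ha hab

theorem isImplicativeFilter_sUnion {c : Set (Set H)} (hc : ∀ E ∈ c, hH.IsImplicativeFilter E)
    (hchain : IsChain (· ⊆ ·) c) (hne : c.Nonempty) : hH.IsImplicativeFilter (⋃₀ c) := by
  obtain ⟨E₀, hE₀⟩ := hne
  refine ⟨⟨E₀, hE₀, (hc E₀ hE₀).1⟩, ?_⟩
  rintro a b ⟨E₁, hE₁, ha⟩ ⟨E₂, hE₂, hab⟩
  rcases hchain.total hE₁ hE₂ with h | h
  · exact ⟨E₂, hE₂, (hc E₂ hE₂).2 a b (h ha) hab⟩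
  · exact ⟨E₁, hE₁, (hc E₁ hE₁).2 a b ha (h hab)⟩

theorem isIrreducible_of_preimage_eq {f : H → G} (hf : hH.IsHom hG f) {P : Set G} {Q : Set H}
    (hP : hG.IsImplicativeFilter P) (hQ : hH.IsIrreducible Q) (hPQ : f ⁻¹' P = Q)
    (hgen : ∀ x ∉ P, ∃ a ∉ Q, hG.imp x (f a) ∈ P) : hG.IsIrreducible P := by
  have eq_of_preimage_eq : ∀ F, hG.IsImplicativeFilter F → P ⊆ F → f ⁻¹' F = Q → P = F := by
    refine fun F hF hPF hFQ => hPF.antisymm fun x hx => by_contra fun hxP => ?_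
    obtain ⟨a, haQ, hxa⟩ := hgen x hxP
    exact haQ (hFQ ▸ hF.2 _ _ hx (hPF hxa))
  obtain ⟨a, haQ⟩ : ∃ a, a ∉ Q := by simpa [Set.eq_univ_iff_forall] using hQ.2.1
  refine ⟨hP, fun hPu => haQ ?_, fun F₁ F₂ hF₁ hF₂ hP₁₂ => ?_⟩
  · rw [← hPQ, hPu]
    trivial
  have hQ₁₂ : Q = f ⁻¹' F₁ ∩ f ⁻¹' F₂ := by rw [← hPQ, hP₁₂, Set.preimage_inter]
  rcases hQ.2.2 _ _ (hF₁.preimage hf) (hF₂.preimage hf) hQ₁₂ with h | h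
  · exact Or.inl (eq_of_preimage_eq F₁ hF₁ (hP₁₂ ▸ Set.inter_subset_left) h.symm)
  · exact Or.inr (eq_of_preimage_eq F₂ hF₂ (hP₁₂ ▸ Set.inter_subset_right) h.symm)

theorem exists_isIrreducible_superset_preimage_eq {f : H → G} (hf : hH.IsHom hG f)
    {F : Set G} {Q : Set H} (hF : hG.IsImplicativeFilter F) (hQ : hH.IsIrreducible Q)
    (hFQ : f ⁻¹' F ⊆ Q) : ∃ P, hG.IsIrreducible P ∧ F ⊆ P ∧ f ⁻¹' P = Q := by
  set S : Set (Set G) := {E | hG.IsImplicativeFilter E ∧ F ⊆ E ∧ f ⁻¹' E ⊆ Q}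
  have hchain : ∀ c ⊆ S, IsChain (· ⊆ ·) c → c.Nonempty → ∃ ub ∈ S, ∀ E ∈ c, E ⊆ ub := by
    rintro c hcS hc ⟨E₀, hE₀⟩
    refine ⟨⋃₀ c, ⟨isImplicativeFilter_sUnion (fun E hE => (hcS hE).1) hc ⟨E₀, hE₀⟩,
      (hcS hE₀).2.1.trans (Set.subset_sUnion_of_mem hE₀), ?_⟩,
      fun E hE => Set.subset_sUnion_of_mem hE⟩
    rintro a ⟨E, hE, ha⟩
    exact (hcS hE).2.2 ha
  obtain ⟨P, hFP, hPmax⟩ := zorn_subset_nonempty S hchain F ⟨hF, subset_rfl, hFQ⟩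
  obtain ⟨hP, -, hPsub⟩ := hPmax.prop
  have mem_of_adjoin_mem : ∀ x, hG.adjoin P x ∈ S → x ∈ P :=
    fun x hx => hPmax.2 hx (hP.subset_adjoin x) (hP.mem_adjoin_self x)
  have adjoin_mem : ∀ x, f ⁻¹' hG.adjoin P x ⊆ Q → hG.adjoin P x ∈ S :=
    fun x hx => ⟨hP.adjoin x, hFP.trans (hP.subset_adjoin x), hx⟩
  have hPQ : f ⁻¹' P = Q := by
    refine hPsub.antisymm fun q hq => mem_of_adjoin_mem _ (adjoin_mem _ fun a ha => ?_)
    have hqa : f (hH.imp q a) ∈ P := by rw [hf.2]; exact ha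
    exact hQ.1.2 q a hq (hPsub hqa)
  refine ⟨P, isIrreducible_of_preimage_eq hf hP hQ hPQ fun x hx => ?_, hFP, hPQ⟩
  by_contra! h
  exact hx (mem_of_adjoin_mem x (adjoin_mem x fun a ha => by_contra fun haQ => h a haQ ha))

theorem isImplicativeFilter_sInter {S : Set (Set H)} (hS : ∀ E ∈ S, hH.IsImplicativeFilter E) :
    hH.IsImplicativeFilter (⋂₀ S) :=
  ⟨fun E hE => (hS E hE).1, fun a b ha hab E hE => (hS E hE).2 a b (ha E hE) (hab E hE)⟩

theorem isImplicativeFilter_of_mem_XStar {F : Set H} (hF : F ∈ hH.XStar) :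
    hH.IsImplicativeFilter F := by
  obtain ⟨S, -, -, hS, rfl⟩ := hF
  exact isImplicativeFilter_sInter fun P hP => (hS P hP).1

theorem inter_mem_XStar {F K : Set H} (hF : F ∈ hH.XStar) (hK : K ∈ hH.XStar) :
    F ∩ K ∈ hH.XStar := by
  obtain ⟨S, hSfin, hSne, hS, rfl⟩ := hF
  obtain ⟨T, hTfin, -, hT, rfl⟩ := hK
  refine ⟨S ∪ T, hSfin.union hTfin, hSne.mono Set.subset_union_left, ?_,
    (Set.sInter_union S T).symm⟩
  rintro P (hP | hP)
  exacts [hS P hP, hT P hP]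

theorem exists_mem_XStar_superset_preimage_eq {f : H → G} (hf : hH.IsHom hG f)
    {F : Set G} {K : Set H} (hF : F ∈ hG.XStar) (hK : K ∈ hH.XStar) (hFK : f ⁻¹' F ⊆ K) :
    ∃ F' ∈ hG.XStar, F ⊆ F' ∧ f ⁻¹' F' = K := by
  obtain ⟨S, hSfin, hSne, hS, rfl⟩ := hK
  choose! P hP hFP hPQ using fun Q (hQ : Q ∈ S) =>
    exists_isIrreducible_superset_preimage_eq hf (isImplicativeFilter_of_mem_XStar hF) (hS Q hQ)
      (hFK.trans (Set.sInter_subset_of_mem hQ))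
  refine ⟨⋂₀ (P '' S), ⟨P '' S, hSfin.image P, hSne.image P, ?_, rfl⟩, ?_, ?_⟩
  · rintro _ ⟨Q, hQ, rfl⟩
    exact hP Q hQ
  · rintro x hx _ ⟨Q, hQ, rfl⟩
    exact hFP Q hQ hx
  · ext a
    simp only [Set.sInter_image, Set.preimage_iInter₂, Set.mem_iInter, Set.mem_sInter]
    exact forall₂_congr fun Q hQ => Set.ext_iff.1 (hPQ Q hQ) a

end HilbertAlgebra

section gstar

variable {H G : Type*} {hH : HilbertAlgebra H} {hG : HilbertAlgebra G} {f : H → G}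

theorem gstar_mono {U V : Set (Set H)} (hUV : U ⊆ V) : gstar hH hG f U ⊆ gstar hH hG f V :=
  fun _ ⟨hF, hU⟩ => ⟨hF, fun J hJ hFJ => hUV (hU J hJ hFJ)⟩

theorem isUpsetXStar_gstar (U : Set (Set H)) : hG.IsUpsetXStar (gstar hH hG f U) :=
  ⟨fun _ hF => hF.1, fun _ _ ⟨_, hU⟩ hK hFK =>
    ⟨hK, fun J hJ hKJ => hU J hJ ((Set.preimage_mono hFK).trans hKJ)⟩⟩

theorem gstar_XStar : gstar hH hG f hH.XStar = hG.XStar :=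
  Set.ext fun _ => ⟨fun hF => hF.1, fun hF => ⟨hF, fun _ hJ _ => hJ⟩⟩

theorem gstar_inter (U V : Set (Set H)) :
    gstar hH hG f (U ∩ V) = gstar hH hG f U ∩ gstar hH hG f V :=
  (Set.subset_inter (gstar_mono Set.inter_subset_left) (gstar_mono Set.inter_subset_right)).antisymm
    fun _ ⟨⟨hF, hU⟩, ⟨_, hV⟩⟩ => ⟨hF, fun J hJ hFJ => ⟨hU J hJ hFJ, hV J hJ hFJ⟩⟩

theorem gstar_union {U V : Set (Set H)} (hU : hH.IsUpsetXStar U) (hV : hH.IsUpsetXStar V) :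
    gstar hH hG f (U ∪ V) = gstar hH hG f U ∪ gstar hH hG f V := by
  refine Set.Subset.antisymm (fun F ⟨hF, hUV⟩ => ?_)
    (Set.union_subset (gstar_mono Set.subset_union_left) (gstar_mono Set.subset_union_right))
  by_contra! h
  simp only [gstar, Set.mem_union, Set.mem_ofPred_eq, hF, true_and, not_or, not_forall] at h
  obtain ⟨⟨J₁, hJ₁, hFJ₁, hJ₁U⟩, ⟨J₂, hJ₂, hFJ₂, hJ₂V⟩⟩ := h
  rcases hUV _ (HilbertAlgebra.inter_mem_XStar hJ₁ hJ₂) (Set.subset_inter hFJ₁ hFJ₂) with h | h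
  exacts [hJ₁U (hU.2 _ _ h hJ₁ Set.inter_subset_left),
    hJ₂V (hV.2 _ _ h hJ₂ Set.inter_subset_right)]

theorem gstar_impUpsStar (hf : hH.IsHom hG f) {U : Set (Set H)} (hU : hH.IsUpsetXStar U)
    (V : Set (Set H)) :
    gstar hH hG f (hH.impUpsStar U V) = hG.impUpsStar (gstar hH hG f U) (gstar hH hG f V) := by
  ext F
  refine ⟨fun ⟨hF, hUV⟩ => ⟨hF, fun K hK hFK ⟨_, hKU⟩ => ⟨hK, fun J hJ hKJ => ?_⟩⟩,
    fun ⟨hF, hUV⟩ => ⟨hF, fun J hJ hFJ => ⟨hJ, fun K hK hJK hKU => ?_⟩⟩⟩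
  · exact (hUV J hJ ((Set.preimage_mono hFK).trans hKJ)).2 J hJ subset_rfl (hKU J hJ hKJ)
  · obtain ⟨F', hF', hFF', hF'K⟩ :=
      HilbertAlgebra.exists_mem_XStar_superset_preimage_eq hf hF hK (hFJ.trans hJK)
    have hF'U : F' ∈ gstar hH hG f U :=
      ⟨hF', fun J' hJ' hKJ' => hU.2 K J' hKU hJ' (hF'K ▸ hKJ')⟩
    exact (hUV F' hF' hFF' hF'U).2 K hK hF'K.subset

end gstar

theorem stmt_19 {H G : Type*} (hH : HilbertAlgebra H) (hG : HilbertAlgebra G) (f : H → G)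
    (hf : hH.IsHom hG f) :
    (∀ U : Set (Set H), hH.IsUpsetXStar U → hG.IsUpsetXStar (gstar hH hG f U)) ∧
    (gstar hH hG f hH.XStar = hG.XStar) ∧
    (∀ U V : Set (Set H), hH.IsUpsetXStar U → hH.IsUpsetXStar V →
      gstar hH hG f (U ∩ V) = gstar hH hG f U ∩ gstar hH hG f V) ∧
    (∀ U V : Set (Set H), hH.IsUpsetXStar U → hH.IsUpsetXStar V →
      gstar hH hG f (U ∪ V) = gstar hH hG f U ∪ gstar hH hG f V) ∧
    (∀ U V : Set (Set H), hH.IsUpsetXStar U → hH.IsUpsetXStar V →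
      gstar hH hG f (hH.impUpsStar U V) = hG.impUpsStar (gstar hH hG f U) (gstar hH hG f V)) :=
  ⟨fun U _ => isUpsetXStar_gstar U, gstar_XStar, fun U V _ _ => gstar_inter U V,
    fun _ _ hU hV => gstar_union hU hV, fun _ V hU _ => gstar_impUpsStar hf hU V⟩
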